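/- arXiv:2501.03189 — 2 statements merged into one kernel-verified Lean document; each statement's English description precedes it below -/
import Mathlib

section
/- Σ_{m,n≥0} q^{2·C(m+1,2)+C(n+1,2)+mn} / ((q;q)_m (q;q)_n) = (q⁴;q⁴)_∞ / (q;q)_∞ as formal power series in q. -/
noncomputable section

/-- The coefficient-wise (product) topology on `ℚ[[q]]`, so that the infinite
sums and products of formal power series below make sense. -/
instance : TopologicalSpace (PowerSeries ℚ) :=
  TopologicalSpace.induced (fun f => fun n => (PowerSeries.coeff (R := ℚ) n) f) inferInstance

/-- The formal variable `q`. -/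
def q : PowerSeries ℚ := PowerSeries.X

/-- The finite q-Pochhammer symbol `(a; b)_n = ∏_{j=1}^n (1 - a b^(j-1))`. -/
def poch (a b : PowerSeries ℚ) (n : ℕ) : PowerSeries ℚ :=
  ∏ j ∈ Finset.range n, (1 - a * b ^ j)

/-- The infinite q-Pochhammer symbol `(a; b)_∞ = ∏_{j≥1} (1 - a b^(j-1))`. -/
def pochInf (a b : PowerSeries ℚ) : PowerSeries ℚ := ∏' j : ℕ, (1 - a * b ^ j)


/-!
Summing over `n` first, Euler's identity `∑ₙ x^(C(n+1,2)) zⁿ / (x;x)ₙ = ∏ⱼ (1 + z xʲ⁺¹)` at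
`z = q^m` turns the inner sum into `(-q;q)_∞ / (-q;q)_m`; since `(q;q)_m (-q;q)_m = (q²;q²)_m`,
the outer sum is `(-q;q)_∞` times Euler's series in base `q²`, i.e. `(-q;q)_∞ (-q²;q²)_∞`.
Finally `(q;q)_∞ (-q;q)_∞ (-q²;q²)_∞ = (q⁴;q⁴)_∞`.

Euler's identity itself is proved for `z = x^a` from the functional equation
`S(a) = (1 + x^(a+d)) S(a+d)` of `S(a) = ∑ₙ x^(d·C(n+1,2) + a·n) / (x^d;x^d)ₙ`, iterated:
`S(a+dt) → 1` as `t → ∞`.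
-/

open Filter Topology Finset

theorem Nat.le_choose_two_succ (n : ℕ) : n ≤ (n + 1).choose 2 := by
  induction n with
  | zero => simp
  | succ n ih => rw [Nat.choose_succ_succ', Nat.choose_one_right]; omega

namespace PowerSeries

open scoped WithPiTopology

theorem summable_X_pow_mul {R ι : Type*} [Semiring R] [TopologicalSpace R] (e : ι → ℕ)
    (f : ι → R⟦X⟧) (he : ∀ k, {i | e i ≤ k}.Finite) : Summable fun i ↦ X ^ e i * f i := by
  refine (WithPiTopology.summable_iff_summable_coeff R).2 fun k ↦
    summable_of_hasFiniteSupport <| (he k).subset fun i hi ↦ ?_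
  by_contra hik
  exact hi (by dsimp only; rw [coeff_X_pow_mul']; exact if_neg hik)

theorem multipliable_one_add_X_pow_mul {R : Type*} [CommSemiring R] [TopologicalSpace R]
    {e : ℕ → ℕ} (he : Tendsto e atTop atTop) (f : ℕ → R⟦X⟧) :
    Multipliable fun j ↦ 1 + X ^ e j * f j := by
  refine WithPiTopology.multipliable_one_add_of_tendsto_order_atTop_nhds_top R
    (ENat.tendsto_nhds_top_iff_natCast_lt.2 fun k ↦ ?_)
  filter_upwards [he.eventually_ge_atTop (k + 1)] with j hj
  refine lt_of_lt_of_le (by exact_mod_cast hj) (nat_le_order _ _ fun i hi ↦ ?_)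
  rw [coeff_X_pow_mul', if_neg (by omega)]

theorem tprod_one_sub_X_pow_mul_tprod_one_add_X_pow {R : Type*} [CommRing R]
    [TopologicalSpace R] [IsTopologicalRing R] [T2Space R] {e : ℕ → ℕ}
    (he : Tendsto e atTop atTop) :
    (∏' j, (1 - X ^ e j : R⟦X⟧)) * ∏' j, (1 + X ^ e j) = ∏' j, (1 - X ^ (2 * e j)) := by
  have hsub : Multipliable fun j ↦ (1 - X ^ e j : R⟦X⟧) :=
    (multipliable_one_add_X_pow_mul he fun _ ↦ -1).congr fun j ↦ by ring
  have hadd : Multipliable fun j ↦ (1 + X ^ e j : R⟦X⟧) :=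
    (multipliable_one_add_X_pow_mul he fun _ ↦ 1).congr fun j ↦ by ring
  rw [← hsub.tprod_mul hadd]
  congr 1
  funext j
  rw [pow_mul']
  ring

section Euler

variable {K : Type*} [Field K]

def eulerTerm (d a n : ℕ) : K⟦X⟧ :=
  X ^ (d * (n + 1).choose 2 + a * n) * (∏ j ∈ range n, (1 - X ^ (d * (j + 1))))⁻¹

theorem eulerTerm_zero (d a : ℕ) : (eulerTerm d a 0 : K⟦X⟧) = 1 := by
  simp [eulerTerm]

theorem eulerTerm_succ {d : ℕ} (hd : 0 < d) (a n : ℕ) :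
    (eulerTerm d a (n + 1) : K⟦X⟧) =
      eulerTerm d (a + d) (n + 1) + X ^ (a + d) * eulerTerm d (a + d) n := by
  have hQ : (1 - X ^ (d * (n + 1)) : K⟦X⟧) * (1 - X ^ (d * (n + 1)))⁻¹ = 1 :=
    PowerSeries.mul_inv_cancel _ (by simp [zero_pow (Nat.mul_ne_zero hd.ne' n.succ_ne_zero)])
  have hchoose : (n + 1 + 1).choose 2 = (n + 1).choose 2 + (n + 1) := by
    rw [Nat.choose_succ_succ', Nat.choose_one_right, add_comm]
  have hexp : d * (n + 1 + 1).choose 2 + a * (n + 1) =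
      (a + d) + (d * (n + 1).choose 2 + (a + d) * n) := by
    rw [hchoose]; ring
  have hexp' : d * (n + 1 + 1).choose 2 + (a + d) * (n + 1) =
      (a + d) + (d * (n + 1).choose 2 + (a + d) * n) + d * (n + 1) := by
    rw [hchoose]; ring
  simp only [eulerTerm, prod_range_succ, PowerSeries.mul_inv_rev, hexp, hexp', pow_add]
  linear_combination X ^ (a + d) * X ^ (d * (n + 1).choose 2 + (a + d) * n) *
    (∏ j ∈ range n, (1 - X ^ (d * (j + 1)) : K⟦X⟧))⁻¹ * hQ

variable [TopologicalSpace K]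

theorem summable_eulerTerm {d : ℕ} (hd : 0 < d) (a : ℕ) :
    Summable (eulerTerm d a : ℕ → K⟦X⟧) :=
  summable_X_pow_mul (fun n ↦ d * (n + 1).choose 2 + a * n)
    (fun n ↦ (∏ j ∈ range n, (1 - X ^ (d * (j + 1))))⁻¹) fun k ↦
      (Set.finite_Iic k).subset fun n (hn : d * (n + 1).choose 2 + a * n ≤ k) ↦ by
        have := Nat.le_choose_two_succ n
        have := Nat.le_mul_of_pos_left ((n + 1).choose 2) hd
        exact show n ≤ k by omega

variable [T2Space K]

theorem tendsto_tsum_eulerTerm_atTop {d : ℕ} (hd : 0 < d) :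
    Tendsto (fun b ↦ ∑' n, (eulerTerm d b n : K⟦X⟧)) atTop (𝓝 1) := by
  refine (WithPiTopology.tendsto_iff_coeff_tendsto K _ _ _).2 fun k ↦
    tendsto_const_nhds.congr' (eventually_atTop.2 ⟨k + 1, fun b hb ↦ ?_⟩)
  dsimp only
  rw [(summable_eulerTerm hd b).map_tsum _ (WithPiTopology.continuous_coeff K k),
    tsum_eq_single 0 fun n hn ↦ ?_, eulerTerm_zero]
  have := Nat.le_mul_of_pos_right b (Nat.pos_of_ne_zero hn)
  rw [eulerTerm, coeff_X_pow_mul', if_neg (by omega)]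

variable [IsTopologicalRing K]

theorem tsum_eulerTerm_eq_mul {d : ℕ} (hd : 0 < d) (a : ℕ) :
    ∑' n, (eulerTerm d a n : K⟦X⟧) = (1 + X ^ (a + d)) * ∑' n, eulerTerm d (a + d) n := by
  have hs := summable_eulerTerm (K := K) hd (a + d)
  rw [(summable_eulerTerm (K := K) hd a).tsum_eq_zero_add]
  simp only [eulerTerm_zero, eulerTerm_succ hd a]
  rw [((summable_nat_add_iff 1).2 hs).tsum_add (hs.mul_left _), hs.tsum_mul_left,
    hs.tsum_eq_zero_add, eulerTerm_zero]
  ring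

theorem tsum_eulerTerm_eq_prod_mul {d : ℕ} (hd : 0 < d) (a t : ℕ) :
    ∑' n, (eulerTerm d a n : K⟦X⟧) =
      (∏ j ∈ range t, (1 + X ^ (a + d * (j + 1)))) * ∑' n, eulerTerm d (a + d * t) n := by
  induction t with
  | zero => simp
  | succ t ih =>
    rw [ih, tsum_eulerTerm_eq_mul hd, prod_range_succ, mul_assoc, mul_add_one d t, ← add_assoc]

theorem hasSum_eulerTerm {d : ℕ} (hd : 0 < d) (a : ℕ) :
    HasSum (eulerTerm d a : ℕ → K⟦X⟧) (∏' j, (1 + X ^ (a + d * (j + 1)))) := by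
  have hmul : Multipliable fun j ↦ (1 + X ^ (a + d * (j + 1)) : K⟦X⟧) :=
    (multipliable_one_add_X_pow_mul (e := fun j ↦ a + d * (j + 1))
      (tendsto_atTop_mono (fun j ↦ show j ≤ _ by nlinarith) tendsto_id) fun _ ↦ 1).congr
      fun j ↦ by ring
  have hlim := hmul.hasProd.tendsto_prod_nat.mul ((tendsto_tsum_eulerTerm_atTop hd).comp
    (tendsto_atTop_mono (fun t ↦ show t ≤ _ by nlinarith) tendsto_id :
      Tendsto (a + d * ·) atTop atTop))
  rw [mul_one] at hlim
  convert (summable_eulerTerm hd a).hasSum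
  exact tendsto_nhds_unique hlim
    (tendsto_const_nhds.congr fun t ↦ tsum_eulerTerm_eq_prod_mul hd a t)

end Euler

section DoubleSeries

variable {K : Type*} [Field K]

def doubleSeriesTerm (p : ℕ × ℕ) : K⟦X⟧ :=
  X ^ (2 * (p.1 + 1).choose 2 + (p.2 + 1).choose 2 + p.1 * p.2) *
    (∏ j ∈ range p.1, (1 - X ^ (j + 1)))⁻¹ * (∏ j ∈ range p.2, (1 - X ^ (j + 1)))⁻¹

theorem prod_one_sub_X_pow_mul_prod_one_add_X_pow (m : ℕ) :
    (∏ j ∈ range m, (1 - X ^ (j + 1) : K⟦X⟧)) * ∏ j ∈ range m, (1 + X ^ (j + 1)) =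
      ∏ j ∈ range m, (1 - X ^ (2 * (j + 1))) := by
  rw [← prod_mul_distrib]
  refine prod_congr rfl fun j _ ↦ ?_
  rw [pow_mul']
  ring

variable [TopologicalSpace K]

theorem summable_doubleSeriesTerm : Summable (doubleSeriesTerm : ℕ × ℕ → K⟦X⟧) :=
  (summable_X_pow_mul (fun p : ℕ × ℕ ↦ 2 * (p.1 + 1).choose 2 + (p.2 + 1).choose 2 + p.1 * p.2)
    (fun p ↦ (∏ j ∈ range p.1, (1 - X ^ (j + 1) : K⟦X⟧))⁻¹ *
      (∏ j ∈ range p.2, (1 - X ^ (j + 1)))⁻¹) fun k ↦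
    ((Set.finite_Iic k).prod (Set.finite_Iic k)).subset fun p
      (hp : 2 * (p.1 + 1).choose 2 + (p.2 + 1).choose 2 + p.1 * p.2 ≤ k) ↦ by
      have := Nat.le_choose_two_succ p.1
      have := Nat.le_choose_two_succ p.2
      exact show p.1 ≤ k ∧ p.2 ≤ k by omega).congr fun p ↦ (mul_assoc _ _ _).symm

variable [IsTopologicalRing K] [T2Space K]

theorem hasSum_doubleSeriesTerm_row (m : ℕ) :
    HasSum (fun n ↦ (doubleSeriesTerm (m, n) : K⟦X⟧))
      ((∏' j, (1 + X ^ (j + 1) : K⟦X⟧)) * eulerTerm 2 0 m) := by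
  set P : K⟦X⟧ := ∏ j ∈ range m, (1 - X ^ (j + 1)) with hP_def
  set E : K⟦X⟧ := ∏ j ∈ range m, (1 + X ^ (j + 1)) with hE_def
  have hE : E * E⁻¹ = 1 := PowerSeries.mul_inv_cancel _ (by simp [E, map_prod])
  have hsplit : E * ∏' j, (1 + X ^ (m + 1 * (j + 1)) : K⟦X⟧) = ∏' j, (1 + X ^ (j + 1)) := by
    have htail : Multipliable fun j ↦ (1 + X ^ (j + m + 1) : K⟦X⟧) :=
      (multipliable_one_add_X_pow_mul (e := fun j ↦ j + m + 1)
        (tendsto_atTop_mono (fun j ↦ show j ≤ _ by omega) tendsto_id) fun _ ↦ 1).congr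
        fun j ↦ by ring
    simp_rw [one_mul, ← add_assoc, add_comm m]
    exact htail.prod_mul_tprod_nat_mul' (f := fun j ↦ 1 + X ^ (j + 1))
  have hrow : X ^ (2 * (m + 1).choose 2) * P⁻¹ * ∏' j, (1 + X ^ (m + 1 * (j + 1))) =
      (∏' j, (1 + X ^ (j + 1) : K⟦X⟧)) * eulerTerm 2 0 m := by
    rw [← hsplit, eulerTerm, ← prod_one_sub_X_pow_mul_prod_one_add_X_pow, ← hP_def, ← hE_def,
      PowerSeries.mul_inv_rev, zero_mul, add_zero]
    linear_combination -X ^ (2 * (m + 1).choose 2) * P⁻¹ *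
      (∏' j, (1 + X ^ (m + 1 * (j + 1)) : K⟦X⟧)) * hE
  have h := (hasSum_eulerTerm (K := K) one_pos m).mul_left (X ^ (2 * (m + 1).choose 2) * P⁻¹)
  rw [hrow] at h
  refine h.congr_fun fun n ↦ ?_
  simp only [doubleSeriesTerm, eulerTerm, one_mul, ← hP_def]
  rw [pow_add, pow_add]
  ring

theorem hasSum_doubleSeriesTerm :
    HasSum (doubleSeriesTerm : ℕ × ℕ → K⟦X⟧)
      ((∏' j, (1 + X ^ (j + 1) : K⟦X⟧)) * ∏' j, (1 + X ^ (2 * (j + 1)))) := by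
  have hcol := (hasSum_eulerTerm (K := K) two_pos 0).mul_left (∏' j, (1 + X ^ (j + 1)))
  simp only [zero_add] at hcol
  exact (summable_doubleSeriesTerm.hasSum.prod_fiberwise hasSum_doubleSeriesTerm_row).unique
    hcol ▸ summable_doubleSeriesTerm.hasSum

theorem tsum_doubleSeriesTerm :
    ∑' p, (doubleSeriesTerm p : K⟦X⟧) =
      (∏' j, (1 - X ^ (4 * (j + 1)))) * (∏' j, (1 - X ^ (j + 1)))⁻¹ := by
  have hP : constantCoeff (∏' j, (1 - X ^ (j + 1) : K⟦X⟧)) = 1 := by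
    rw [(WithPiTopology.multipliable_one_sub_X_pow K).map_tprod _
      (WithPiTopology.continuous_constantCoeff K)]
    simp
  rw [hasSum_doubleSeriesTerm.tsum_eq, eq_mul_inv_iff_mul_eq (by simp [hP]), mul_comm,
    ← mul_assoc, tprod_one_sub_X_pow_mul_tprod_one_add_X_pow (tendsto_add_atTop_nat 1),
    tprod_one_sub_X_pow_mul_tprod_one_add_X_pow
      (tendsto_atTop_mono (fun j ↦ show j ≤ 2 * (j + 1) by omega) tendsto_id)]
  simp only [← mul_assoc]
  norm_num

end DoubleSeries

end PowerSeries

open PowerSeries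

theorem coeffTopology_eq_piTopology :
    (inferInstance : TopologicalSpace ℚ⟦X⟧) = WithPiTopology.instTopologicalSpace ℚ := by
  apply le_antisymm
  · rw [← continuous_id_iff_le]
    refine continuous_pi fun d ↦ ?_
    rw [Finsupp.unique_single d]
    exact (continuous_apply (A := fun _ : ℕ ↦ ℚ) (d default)).comp
      (continuous_induced_dom (f := fun f : ℚ⟦X⟧ ↦ fun n ↦ coeff n f))
  · exact continuous_iff_le_induced.1
      (@continuous_pi _ _ _ (WithPiTopology.instTopologicalSpace ℚ) _ _
        fun n ↦ WithPiTopology.continuous_coeff ℚ n)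

theorem double_series_eq_product :
    ∑' p : ℕ × ℕ,
        q ^ (2 * (p.1+1).choose 2 + (p.2+1).choose 2 + p.1 * p.2)
          * (poch q q p.1)⁻¹ * (poch q q p.2)⁻¹
      = pochInf (q ^ 4) (q ^ 4) * (pochInf q q)⁻¹ := by
  have hq : ∀ j, q * q ^ j = X ^ (j + 1) := fun j ↦ (pow_succ' X j).symm
  have hq4 : ∀ j, q ^ 4 * (q ^ 4) ^ j = X ^ (4 * (j + 1)) := fun j ↦ by
    rw [← pow_succ', ← pow_mul, q]
  have h := tsum_doubleSeriesTerm (K := ℚ)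
  rw [← coeffTopology_eq_piTopology] at h
  simp only [poch, pochInf, hq, hq4]
  exact h
end
end

section
/- Σ_{m,n≥0} (−1)^n q^{2·C(m+1,2)+2·C(n+1,2)+2mn+m+n} / ((q;q)_m (q²;q²)_n) = Σ_{m,n≥0} q^{8·C(m+1,2)+2·C(n+1,2)+4mn+2n} / ((q⁴;q⁴)_m (q²;q²)_n), i.e. the alternating double series equals an evidently positive double series. -/
noncomputable section

/-!
Grouping the terms by `s = m + n` on the left and by `s = 2m + n` on the right, both sides take
the form `∑ₛ q^(s(s+2)) cₛ`, where `cₛ` is the `s`-th coefficient in `z` of `e_q(z) e_{q²}(-z)`,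
respectively of `e_{q⁴}(z²) e_{q²}(qz)`, with `e_t(z) = ∑ zⁿ / (t; t)ₙ`. From
`e_t(tz) = (1 - z) e_t(z)`, both products satisfy `F(q²z) = (1 - z²)(1 - qz) F(z)` and `F(0) = 1`,
which determines `F` coefficient by coefficient because `q^(2s) ≠ 1` for `s ≥ 1`.
-/

open PowerSeries Finset

namespace PowerSeries

theorem summable_coeff_X_pow_mul {R ι : Type*} [Semiring R] [TopologicalSpace R]
    {w : ι → ℕ} (hw : ∀ N, {i | w i ≤ N}.Finite) (u : ι → R⟦X⟧) (N : ℕ) :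
    Summable fun i => coeff N (X ^ w i * u i) := by
  refine summable_of_hasFiniteSupport ((hw N).subset fun i hi => ?_)
  rw [Function.mem_support, coeff_X_pow_mul'] at hi
  by_contra h
  exact hi (if_neg h)

variable {R : Type*} [CommRing R]

theorem eq_zero_of_rescale_eq_mul [NoZeroDivisors R] {u : R} (hu : ¬ IsOfFinOrder u)
    {P F : R⟦X⟧} (hP : constantCoeff P = 1) (hF : rescale u F = P * F)
    (h0 : constantCoeff F = 0) : F = 0 := by
  ext n
  induction n using Nat.strong_induction_on with
  | _ n ih =>
    rcases Nat.eq_zero_or_pos n with rfl | hn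
    · simpa using h0
    have hcoeff : u ^ n * coeff n F = coeff n F := by
      rw [← coeff_rescale, hF, coeff_mul, sum_eq_single (0, n)]
      · simp [hP]
      · rintro ⟨i, j⟩ hij hne
        have hj : j < n := by
          simp only [HasAntidiagonal.mem_antidiagonal, ne_eq, Prod.mk.injEq] at hij hne
          omega
        simp [ih j hj]
      · simp
    have hun : u ^ n - 1 ≠ 0 :=
      sub_ne_zero.2 fun h => hu (isOfFinOrder_iff_pow_eq_one.2 ⟨n, hn, h⟩)
    exact (mul_eq_zero.1 (by rw [sub_mul, one_mul, hcoeff, sub_self])).resolve_left hun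

theorem eq_of_rescale_eq_mul [NoZeroDivisors R] {u : R} (hu : ¬ IsOfFinOrder u)
    {P F G : R⟦X⟧} (hP : constantCoeff P = 1) (hF : rescale u F = P * F)
    (hG : rescale u G = P * G) (h0 : constantCoeff F = constantCoeff G) : F = G :=
  sub_eq_zero.1 <| eq_zero_of_rescale_eq_mul hu hP
    (by rw [map_sub, hF, hG, mul_sub]) (by rw [map_sub, h0, sub_self])

theorem rescale_expand (p : ℕ) (hp : p ≠ 0) (u : R) (F : R⟦X⟧) :
    rescale u (expand p hp F) = expand p hp (rescale (u ^ p) F) := by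
  ext n
  simp only [coeff_rescale, coeff_expand]
  split_ifs with h
  · obtain ⟨m, rfl⟩ := h
    rw [Nat.mul_div_cancel_left _ (Nat.pos_of_ne_zero hp), ← pow_mul]
  · rw [mul_zero]

theorem constantCoeff_rescale (u : R) (F : R⟦X⟧) :
    constantCoeff (rescale u F) = constantCoeff F := by
  rw [← coeff_zero_eq_constantCoeff_apply, coeff_rescale, pow_zero, one_mul,
    coeff_zero_eq_constantCoeff_apply]

end PowerSeries

theorem HasSum.of_sum_antidiagonal {α A : Type*} [AddCommMonoid α] [TopologicalSpace α]
    [ContinuousAdd α] [T3Space α] [AddCommMonoid A] [HasAntidiagonal A] {f : A × A → α} {a : α}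
    (hf : Summable f) (h : HasSum (fun n => ∑ p ∈ antidiagonal n, f p) a) : HasSum f a := by
  rw [← HasAntidiagonal.sigmaAntidiagonalEquivProd.hasSum_iff]
  exact h.sigma_of_hasSum (fun n => (antidiagonal n).hasSum f)
    (HasAntidiagonal.sigmaAntidiagonalEquivProd.summable_iff.2 hf)

theorem tsum_two_mul_fst_eq {α : Type*} [AddCommMonoid α] [TopologicalSpace α]
    {f : ℕ × ℕ → α} (hf : ∀ p : ℕ × ℕ, Odd p.1 → f p = 0) :
    ∑' p : ℕ × ℕ, f (2 * p.1, p.2) = ∑' p, f p := by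
  refine Function.Injective.tsum_eq (g := fun p : ℕ × ℕ => (2 * p.1, p.2))
    (fun a b h => by simp_all [Prod.ext_iff]) fun p hp => ?_
  obtain ⟨m, hm⟩ := Nat.not_odd_iff_even.1 fun h => hp (hf p h)
  exact ⟨(m, p.2), Prod.ext (by simp only; omega) rfl⟩

theorem two_mul_choose_two (m : ℕ) : 2 * (m + 1).choose 2 = (m + 1) * m := by
  have h := Nat.add_one_mul_choose_eq m 1
  rw [Nat.choose_one_right] at h
  rw [h, mul_comm]

theorem isInducing_coeff :
    Topology.IsInducing fun (f : PowerSeries ℚ) (n : ℕ) => coeff n f := ⟨rfl⟩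

instance : T2Space (PowerSeries ℚ) :=
  Topology.IsEmbedding.t2Space ⟨isInducing_coeff, fun _ _ h => PowerSeries.ext (congrFun h)⟩

theorem hasSum_iff_hasSum_coeff {ι : Type*} {f : ι → PowerSeries ℚ} {S : PowerSeries ℚ} :
    HasSum f S ↔ ∀ N, HasSum (fun i => coeff N (f i)) (coeff N S) := by
  simp only [HasSum, isInducing_coeff.tendsto_nhds_iff, tendsto_pi_nhds, Function.comp_def,
    map_sum]

theorem summable_q_pow_mul {ι : Type*} {w : ι → ℕ} (hw : ∀ N, {i | w i ≤ N}.Finite)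
    (u : ι → PowerSeries ℚ) : Summable fun i => q ^ w i * u i :=
  ⟨mk fun N => ∑' i, coeff N (q ^ w i * u i), hasSum_iff_hasSum_coeff.2 fun N => by
    simpa [q] using (summable_coeff_X_pow_mul hw u N).hasSum⟩

theorem hasSum_q_pow_mul_coeff_mul {φ : ℕ → ℕ} (hφ : ∀ s, s ≤ φ s)
    (F G : PowerSeries (PowerSeries ℚ)) :
    HasSum (fun p : ℕ × ℕ => q ^ φ (p.1 + p.2) * (coeff p.1 F * coeff p.2 G))
      (∑' s, q ^ φ s * coeff s (F * G)) := by
  have hw : ∀ N, {s | φ s ≤ N}.Finite := fun N =>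
    (Set.finite_Iic N).subset fun s hs => (hφ s).trans hs
  have hw₂ : ∀ N, {p : ℕ × ℕ | φ (p.1 + p.2) ≤ N}.Finite := fun N =>
    ((Set.finite_Iic N).prod (Set.finite_Iic N)).subset fun p hp => by
      have := (hφ _).trans hp
      simp only [Set.mem_prod, Set.mem_Iic]
      omega
  have hsum := hasSum_iff_hasSum_coeff.1 (summable_q_pow_mul hw fun s => coeff s (F * G)).hasSum
  refine hasSum_iff_hasSum_coeff.2 fun N => HasSum.of_sum_antidiagonal
    (summable_coeff_X_pow_mul hw₂ _ N) ?_
  convert hsum N using 2 with s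
  rw [coeff_mul s F G, mul_sum, map_sum]
  refine sum_congr rfl fun p hp => ?_
  rw [HasAntidiagonal.mem_antidiagonal.1 hp]

theorem poch_succ (a b : PowerSeries ℚ) (n : ℕ) :
    poch a b (n + 1) = poch a b n * (1 - a * b ^ n) :=
  prod_range_succ _ _

theorem poch_inv_eq_mul_poch_succ_inv {a : PowerSeries ℚ} (ha : constantCoeff a = 0)
    (b : PowerSeries ℚ) (n : ℕ) :
    (poch a b n)⁻¹ = (1 - a * b ^ n) * (poch a b (n + 1))⁻¹ := by
  rw [poch_succ, PowerSeries.mul_inv_rev, ← mul_assoc,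
    PowerSeries.mul_inv_cancel _ (by simp [ha]), one_mul]

/-- The q-exponential `e_t(z) = ∑ zⁿ / (t; t)ₙ`. -/
def qExp (t : PowerSeries ℚ) : PowerSeries (PowerSeries ℚ) :=
  PowerSeries.mk fun n => (poch t t n)⁻¹

theorem coeff_qExp (t : PowerSeries ℚ) (n : ℕ) : coeff n (qExp t) = (poch t t n)⁻¹ :=
  coeff_mk _ _

theorem constantCoeff_qExp (t : PowerSeries ℚ) : constantCoeff (qExp t) = 1 := by
  rw [← coeff_zero_eq_constantCoeff_apply, coeff_qExp, poch, prod_range_zero, inv_one]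

theorem rescale_qExp {t : PowerSeries ℚ} (ht : constantCoeff t = 0) :
    rescale t (qExp t) = (1 - X) * qExp t := by
  refine PowerSeries.ext fun n => ?_
  rcases n with _ | n
  · simp
  · rw [coeff_rescale, sub_mul, one_mul, map_sub, coeff_succ_X_mul, coeff_qExp, coeff_qExp,
      poch_inv_eq_mul_poch_succ_inv ht t n, ← pow_succ']
    ring

theorem constantCoeff_q : constantCoeff q = 0 := constantCoeff_X

theorem not_isOfFinOrder_q_pow {k : ℕ} (hk : k ≠ 0) : ¬ IsOfFinOrder (q ^ k) := by
  rw [isOfFinOrder_iff_pow_eq_one]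
  rintro ⟨n, hn, h⟩
  simpa [← pow_mul, constantCoeff_q, hk, hn.ne'] using congrArg constantCoeff h

theorem rescale_qExp_q_pow {k : ℕ} (hk : k ≠ 0) :
    rescale (q ^ k) (qExp (q ^ k)) = (1 - X) * qExp (q ^ k) :=
  rescale_qExp (by simp [constantCoeff_q, hk])

def alternatingGF : PowerSeries (PowerSeries ℚ) :=
  qExp q * rescale (-1) (qExp (q ^ 2))

def positiveGF : PowerSeries (PowerSeries ℚ) :=
  expand 2 two_ne_zero (qExp (q ^ 4)) * rescale q (qExp (q ^ 2))

theorem rescale_alternatingGF :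
    rescale (q ^ 2) alternatingGF = (1 - X ^ 2) * (1 - C q * X) * alternatingGF := by
  have hE1 : rescale (q ^ 2) (qExp q) = (1 - C q * X) * ((1 - X) * qExp q) := by
    rw [sq, rescale_mul, RingHom.comp_apply, rescale_qExp constantCoeff_q, map_mul,
      rescale_qExp constantCoeff_q, map_sub, map_one, rescale_X]
  have hE2 : rescale (q ^ 2) (rescale (-1) (qExp (q ^ 2)))
      = (1 + X) * rescale (-1) (qExp (q ^ 2)) := by
    rw [rescale_rescale, mul_comm, ← rescale_rescale, rescale_qExp_q_pow two_ne_zero, map_mul,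
      map_sub, map_one, rescale_neg_one_X, sub_neg_eq_add]
  rw [alternatingGF, map_mul, hE1, hE2]
  ring

theorem rescale_positiveGF :
    rescale (q ^ 2) positiveGF = (1 - X ^ 2) * (1 - C q * X) * positiveGF := by
  have hE4 : rescale (q ^ 2) (expand 2 two_ne_zero (qExp (q ^ 4)))
      = (1 - X ^ 2) * expand 2 two_ne_zero (qExp (q ^ 4)) := by
    rw [rescale_expand, ← pow_mul, rescale_qExp_q_pow four_ne_zero, map_mul, map_sub, map_one,
      expand_X]
  have hE2 : rescale (q ^ 2) (rescale q (qExp (q ^ 2)))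
      = (1 - C q * X) * rescale q (qExp (q ^ 2)) := by
    rw [rescale_rescale, mul_comm, ← rescale_rescale, rescale_qExp_q_pow two_ne_zero, map_mul,
      map_sub, map_one, rescale_X]
  rw [positiveGF, map_mul, hE4, hE2]
  ring

theorem alternatingGF_eq_positiveGF : alternatingGF = positiveGF :=
  eq_of_rescale_eq_mul (not_isOfFinOrder_q_pow two_ne_zero) (by simp)
    rescale_alternatingGF rescale_positiveGF
    (by simp [alternatingGF, positiveGF, constantCoeff_rescale, constantCoeff_qExp])

theorem alt_series_eq_positive_series :
    ∑' p : ℕ × ℕ,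
        (-1 : PowerSeries ℚ) ^ p.2
          * q ^ (2 * (p.1+1).choose 2 + 2 * (p.2+1).choose 2 + 2 * p.1 * p.2
                  + p.1 + p.2)
          * (poch q q p.1)⁻¹ * (poch (q ^ 2) (q ^ 2) p.2)⁻¹
      = ∑' p : ℕ × ℕ,
          q ^ (8 * (p.1+1).choose 2 + 2 * (p.2+1).choose 2 + 4 * p.1 * p.2
                + 2 * p.2)
            * (poch (q ^ 4) (q ^ 4) p.1)⁻¹ * (poch (q ^ 2) (q ^ 2) p.2)⁻¹ := by
  have hφ : ∀ s, s ≤ s * (s + 2) := fun s => Nat.le_mul_of_pos_right s (by omega)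
  calc _ = ∑' s, q ^ (s * (s + 2)) * coeff s alternatingGF := by
        refine (tsum_congr fun p => ?_).trans
          (hasSum_q_pow_mul_coeff_mul hφ (qExp q) (rescale (-1) (qExp (q ^ 2)))).tsum_eq
        rw [coeff_qExp, coeff_rescale, coeff_qExp, two_mul_choose_two, two_mul_choose_two]
        ring
    _ = ∑' s, q ^ (s * (s + 2)) * coeff s positiveGF := by rw [alternatingGF_eq_positiveGF]
    _ = _ := by
        refine (hasSum_q_pow_mul_coeff_mul hφ (expand 2 two_ne_zero (qExp (q ^ 4)))
          (rescale q (qExp (q ^ 2)))).tsum_eq.symm.trans ?_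
        rw [← tsum_two_mul_fst_eq fun p hp => by
          simp [coeff_expand_of_not_dvd _ _ _ hp.not_two_dvd_nat]]
        refine tsum_congr fun p => ?_
        rw [coeff_expand_mul, coeff_qExp, coeff_rescale, coeff_qExp,
          show 8 * (p.1 + 1).choose 2 = 4 * (2 * (p.1 + 1).choose 2) by ring,
          two_mul_choose_two, two_mul_choose_two]
        ring
end
end
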